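/- Fix N ∈ ℕ. Let Y₀ be a random variable with values in {0,…,N}, independent of (P,R), and let Y₁ be a random variable whose conditional distribution given (Y₀, P, R) = (k, p, r) is that of B₁ + B₂ with B₁, B₂ independent, B₁ ~ Binomial(k, r), B₂ ~ Binomial(N−k, 1−p). Assume Y₁ has the same distribution as Y₀. Then E[Y₀] = N·(1 − E[P]) / (2 − E[P] − E[R]). -/

import Mathlib

/-!
The conditional law of `Y₁` is a convolution of two binomials, so its conditional mean is
`Y₀ R + (N - Y₀)(1 - P)`. Because `Y₀` is independent of `(P, R)`, taking expectations gives
`E[Y₁] = N (1 - E P) + E[Y₀] (E P + E R - 1)`, and stationarity `E[Y₁] = E[Y₀]` turns this into a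
linear equation for `E[Y₀]`, uniquely solvable since `E P < 1` and `E R < 1`.
-/

open MeasureTheory ProbabilityTheory

/-- The probability mass function of the binomial distribution with `n` trials and success
probability `q`, evaluated at `j`. -/
noncomputable def binomPMF (n : ℕ) (q : ℝ) (j : ℕ) : ℝ :=
  (n.choose j : ℝ) * q ^ j * (1 - q) ^ (n - j)

/-- The pmf at `m` of `B₁ + B₂` with `B₁ ~ Binomial(k, r)` and `B₂ ~ Binomial(N − k, 1 − p)`
independent. -/
noncomputable def convPMF (N k : ℕ) (p r : ℝ) (m : ℕ) : ℝ :=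
  ∑ j ∈ Finset.range (m + 1), binomPMF k r j * binomPMF (N - k) (1 - p) (m - j)

open Finset

section Binomial

open Polynomial

lemma binomPMF_eq_eval_bernsteinPolynomial (n : ℕ) (q : ℝ) (j : ℕ) :
    binomPMF n q j = (bernsteinPolynomial ℝ n j).eval q := by
  simp [binomPMF, bernsteinPolynomial]

lemma binomPMF_eq_zero_of_lt {n j : ℕ} (h : n < j) (q : ℝ) : binomPMF n q j = 0 := by
  simp [binomPMF, Nat.choose_eq_zero_of_lt h]

lemma binomPMF_nonneg {q : ℝ} (hq : q ∈ Set.Icc (0 : ℝ) 1) (n j : ℕ) : 0 ≤ binomPMF n q j := by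
  obtain ⟨hq0, hq1⟩ := hq
  have : 0 ≤ 1 - q := sub_nonneg.2 hq1
  unfold binomPMF
  positivity

lemma sum_binomPMF (n : ℕ) (q : ℝ) : ∑ j ∈ range (n + 1), binomPMF n q j = 1 := by
  simp_rw [binomPMF_eq_eval_bernsteinPolynomial, ← eval_finsetSum, bernsteinPolynomial.sum,
    eval_one]

lemma sum_mul_binomPMF (n : ℕ) (q : ℝ) :
    ∑ j ∈ range (n + 1), (j : ℝ) * binomPMF n q j = n * q := by
  have := congrArg (eval q) (bernsteinPolynomial.sum_smul ℝ n)
  simpa [eval_finsetSum, binomPMF_eq_eval_bernsteinPolynomial] using this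

end Binomial

lemma sum_range_eq_sum_range_of_eq_zero {M : Type*} [AddCommMonoid M] {f : ℕ → M} {a n : ℕ}
    (han : a < n) (hf : ∀ i, a < i → f i = 0) :
    ∑ i ∈ range n, f i = ∑ i ∈ range (a + 1), f i :=
  (sum_subset (range_subset_range.2 han) fun i hi hia => hf i (by simpa using hia)).symm

lemma sum_range_mul_convolution {R : Type*} [CommSemiring R] {f g : ℕ → R} {a b : ℕ}
    (hf : ∀ i, a < i → f i = 0) (hg : ∀ j, b < j → g j = 0) (h : ℕ → R) :
    ∑ m ∈ range (a + b + 1), h m * ∑ j ∈ range (m + 1), f j * g (m - j)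
      = ∑ i ∈ range (a + 1), ∑ j ∈ range (b + 1), h (i + j) * (f i * g j) := by
  calc _ = ∑ m ∈ range (a + b + 1), ∑ j ∈ range (m + 1), h (j + (m - j)) * (f j * g (m - j)) := by
        refine sum_congr rfl fun m _ => ?_
        rw [mul_sum]
        refine sum_congr rfl fun j hj => ?_
        rw [Nat.add_sub_cancel' (Nat.lt_succ_iff.1 (mem_range.1 hj))]
    _ = ∑ i ∈ range (a + b + 1), ∑ j ∈ range (a + b + 1 - i), h (i + j) * (f i * g j) :=
        sum_range_diag_flip _ fun i j => h (i + j) * (f i * g j)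
    _ = ∑ i ∈ range (a + 1), ∑ j ∈ range (a + b + 1 - i), h (i + j) * (f i * g j) :=
        sum_range_eq_sum_range_of_eq_zero (by omega) fun i hi => by simp [hf i hi]
    _ = _ := by
        refine sum_congr rfl fun i hi => ?_
        have := mem_range.1 hi
        exact sum_range_eq_sum_range_of_eq_zero (by omega) fun j hj => by simp [hg j hj]

lemma sum_range_mul_convPMF {N k : ℕ} (hk : k ≤ N) (p r : ℝ) (h : ℕ → ℝ) :
    ∑ m ∈ range (N + 1), h m * convPMF N k p r m
      = ∑ i ∈ range (k + 1), ∑ j ∈ range (N - k + 1),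
          h (i + j) * (binomPMF k r i * binomPMF (N - k) (1 - p) j) := by
  have := sum_range_mul_convolution (fun i hi => binomPMF_eq_zero_of_lt (n := k) hi r)
    (fun j hj => binomPMF_eq_zero_of_lt (n := N - k) hj (1 - p)) h
  rwa [Nat.add_sub_cancel' hk] at this

lemma sum_convPMF {N k : ℕ} (hk : k ≤ N) (p r : ℝ) :
    ∑ m ∈ range (N + 1), convPMF N k p r m = 1 := by
  simpa [← mul_sum, ← sum_mul, sum_binomPMF] using sum_range_mul_convPMF hk p r fun _ => 1

lemma sum_mul_convPMF {N k : ℕ} (hk : k ≤ N) (p r : ℝ) :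
    ∑ m ∈ range (N + 1), (m : ℝ) * convPMF N k p r m = k * r + (N - k) * (1 - p) := by
  rw [sum_range_mul_convPMF hk]
  simp only [Nat.cast_add, add_mul, sum_add_distrib]
  calc _ = (∑ i ∈ range (k + 1), (i : ℝ) * binomPMF k r i)
          * ∑ j ∈ range (N - k + 1), binomPMF (N - k) (1 - p) j
        + (∑ i ∈ range (k + 1), binomPMF k r i)
          * ∑ j ∈ range (N - k + 1), (j : ℝ) * binomPMF (N - k) (1 - p) j := by
        simp only [sum_mul_sum]
        congr 1 <;> exact sum_congr rfl fun _ _ => sum_congr rfl fun _ _ => by ring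
    _ = _ := by
        rw [sum_mul_binomPMF, sum_mul_binomPMF, sum_binomPMF, sum_binomPMF, Nat.cast_sub hk]
        ring

lemma convPMF_nonneg (N k : ℕ) {p r : ℝ} (hp : p ∈ Set.Icc (0 : ℝ) 1) (hr : r ∈ Set.Icc (0 : ℝ) 1)
    (m : ℕ) : 0 ≤ convPMF N k p r m :=
  sum_nonneg fun _ _ => mul_nonneg (binomPMF_nonneg hr _ _)
    (binomPMF_nonneg ⟨sub_nonneg.2 hp.2, by linarith [hp.1]⟩ _ _)

lemma convPMF_le_one {N k m : ℕ} (hk : k ≤ N) (hm : m ≤ N) {p r : ℝ} (hp : p ∈ Set.Icc (0 : ℝ) 1)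
    (hr : r ∈ Set.Icc (0 : ℝ) 1) : convPMF N k p r m ≤ 1 :=
  sum_convPMF hk p r ▸ single_le_sum (fun i _ => convPMF_nonneg N k hp hr i)
    (mem_range_succ_iff.2 hm)

lemma measurable_convPMF (N m : ℕ) :
    Measurable fun x : ℕ × ℝ × ℝ => convPMF N x.1 x.2.1 x.2.2 m :=
  measurable_from_prod_countable_right fun k => by unfold convPMF binomPMF; fun_prop

section Probability

variable {Ω : Type*} [MeasurableSpace Ω] {μ : Measure Ω}

lemma integral_natCast_eq_sum [IsFiniteMeasure μ] {X : Ω → ℕ} (hX : Measurable X) {N : ℕ}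
    (hXN : ∀ᵐ ω ∂μ, X ω ≤ N) :
    ∫ ω, (X ω : ℝ) ∂μ = ∑ m ∈ range (N + 1), (m : ℝ) * μ.real {ω | X ω = m} := by
  have hset : ∀ m, MeasurableSet {ω | X ω = m} := fun m => hX (measurableSet_singleton m)
  have hrepr : ∀ᵐ ω ∂μ, (X ω : ℝ)
      = ∑ m ∈ range (N + 1), {ω | X ω = m}.indicator (fun _ => (m : ℝ)) ω := by
    filter_upwards [hXN] with ω hω
    rw [sum_eq_single_of_mem (X ω) (mem_range_succ_iff.2 hω)
      fun m _ hm => Set.indicator_of_notMem (fun h => hm h.symm) _]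
    simp
  rw [integral_congr_ae hrepr,
    integral_finsetSum _ fun m _ => (integrable_const _).indicator (hset m)]
  simp_rw [integral_indicator_const _ (hset _), smul_eq_mul, mul_comm]

lemma integral_lt_of_ae_lt [IsProbabilityMeasure μ] {X : Ω → ℝ} {c : ℝ} (hX : Integrable X μ)
    (hXc : ∀ᵐ ω ∂μ, X ω < c) : ∫ ω, X ω ∂μ < c := by
  have hpos : 0 < ∫ ω, (c - X ω) ∂μ := by
    rw [integral_pos_iff_support_of_nonneg_ae (hXc.mono fun ω h => (sub_pos.2 h).le)
      ((integrable_const c).sub hX), pos_iff_ne_zero]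
    intro h0
    obtain ⟨ω, hω, hω'⟩ := (hXc.and (measure_eq_zero_iff_ae_notMem.1 h0)).exists
    exact hω' (sub_ne_zero.2 hω.ne')
  rw [integral_sub (integrable_const c) hX, integral_const, probReal_univ, one_smul] at hpos
  linarith

variable [IsProbabilityMeasure μ] {P R : Ω → ℝ} {N : ℕ} {Y₀ Y₁ : Ω → ℕ}

lemma integral_natCast_eq_of_law_eq_convPMF
    (hP : Measurable P) (hR : Measurable R)
    (hPR : ∀ᵐ ω ∂μ, P ω ∈ Set.Icc (0 : ℝ) 1 ∧ R ω ∈ Set.Icc (0 : ℝ) 1)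
    (hY₀ : Measurable Y₀) (hY₁ : Measurable Y₁) (hY₀N : ∀ ω, Y₀ ω ≤ N)
    (hY₁N : ∀ᵐ ω ∂μ, Y₁ ω ≤ N)
    (hlaw : ∀ m, μ.real {ω | Y₁ ω = m} = ∫ ω, convPMF N (Y₀ ω) (P ω) (R ω) m ∂μ) :
    ∫ ω, (Y₁ ω : ℝ) ∂μ = ∫ ω, ((Y₀ ω : ℝ) * R ω + (N - Y₀ ω) * (1 - P ω)) ∂μ := by
  have hint : ∀ m ≤ N, Integrable (fun ω => convPMF N (Y₀ ω) (P ω) (R ω) m) μ := fun m hm =>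
    .of_mem_Icc 0 1 ((measurable_convPMF N m).comp (hY₀.prodMk (hP.prodMk hR))).aemeasurable
      (hPR.mono fun ω h => ⟨convPMF_nonneg N _ h.1 h.2 m, convPMF_le_one (hY₀N ω) hm h.1 h.2⟩)
  calc _ = ∑ m ∈ range (N + 1), (m : ℝ) * ∫ ω, convPMF N (Y₀ ω) (P ω) (R ω) m ∂μ := by
        simp_rw [integral_natCast_eq_sum hY₁ hY₁N, hlaw]
    _ = ∫ ω, ∑ m ∈ range (N + 1), (m : ℝ) * convPMF N (Y₀ ω) (P ω) (R ω) m ∂μ := by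
        rw [integral_finsetSum _ fun m hm => (hint m (mem_range_succ_iff.1 hm)).const_mul _]
        simp_rw [integral_const_mul]
    _ = _ := integral_congr_ae (.of_forall fun ω => sum_mul_convPMF (hY₀N ω) _ _)

lemma integral_mean_convPMF_of_indepFun
    (hP : Measurable P) (hR : Measurable R)
    (hPR : ∀ᵐ ω ∂μ, P ω ∈ Set.Icc (0 : ℝ) 1 ∧ R ω ∈ Set.Icc (0 : ℝ) 1)
    (hY₀ : Measurable Y₀) (hY₀N : ∀ ω, Y₀ ω ≤ N)
    (hindep : IndepFun Y₀ (fun ω => (P ω, R ω)) μ) :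
    ∫ ω, ((Y₀ ω : ℝ) * R ω + (N - Y₀ ω) * (1 - P ω)) ∂μ
      = N * (1 - ∫ ω, P ω ∂μ) + (∫ ω, (Y₀ ω : ℝ) ∂μ) * ((∫ ω, P ω ∂μ) + (∫ ω, R ω ∂μ) - 1) := by
  have hPint : Integrable P μ := .of_mem_Icc 0 1 hP.aemeasurable (hPR.mono fun _ h => h.1)
  have hRint : Integrable R μ := .of_mem_Icc 0 1 hR.aemeasurable (hPR.mono fun _ h => h.2)
  have hYint : Integrable (fun ω => (Y₀ ω : ℝ)) μ :=
    .of_mem_Icc 0 N (measurable_from_top.comp hY₀).aemeasurable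
      (.of_forall fun ω => ⟨Nat.cast_nonneg _, Nat.cast_le.2 (hY₀N ω)⟩)
  have hPRint : Integrable (fun ω => P ω + R ω) μ := hPint.add hRint
  have hSint : Integrable (fun ω => P ω + R ω - 1) μ := hPRint.sub (integrable_const 1)
  have hYS : IndepFun (fun ω => (Y₀ ω : ℝ)) (fun ω => P ω + R ω - 1) μ :=
    hindep.comp measurable_from_top ((measurable_fst.add measurable_snd).sub_const 1)
  have hprod : ∫ ω, (Y₀ ω : ℝ) * (P ω + R ω - 1) ∂μ
      = (∫ ω, (Y₀ ω : ℝ) ∂μ) * ∫ ω, (P ω + R ω - 1) ∂μ :=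
    hYS.integral_mul_eq_mul_integral hYint.aestronglyMeasurable hSint.aestronglyMeasurable
  calc _ = ∫ ω, (N * (1 - P ω) + (Y₀ ω : ℝ) * (P ω + R ω - 1)) ∂μ :=
        integral_congr_ae (.of_forall fun ω => by ring)
    _ = _ := by
        have hNint : Integrable (fun ω => (N : ℝ) * (1 - P ω)) μ :=
          ((integrable_const 1).sub hPint).const_mul _
        have hprodInt : Integrable (fun ω => (Y₀ ω : ℝ) * (P ω + R ω - 1)) μ :=
          hYS.integrable_mul hYint hSint
        rw [integral_add hNint hprodInt,
          integral_const_mul, hprod, integral_sub (integrable_const 1) hPint,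
          integral_sub hPRint (integrable_const 1), integral_add hPint hRint]
        simp

end Probability

/-- In the stationary resampling model,
`E[Y₀] = N·(1 − E[P])/(2 − E[P] − E[R])`. -/
theorem stmt_16
    {Ω : Type*} [MeasurableSpace Ω] (μ : Measure Ω) [IsProbabilityMeasure μ]
    (P R : Ω → ℝ) (hP : Measurable P) (hR : Measurable R)
    (hPR : ∀ᵐ ω ∂μ, P ω ∈ Set.Ioo (0 : ℝ) 1 ∧ R ω ∈ Set.Ioo (0 : ℝ) 1)
    (N : ℕ) (Y₀ Y₁ : Ω → ℕ) (hY₀ : Measurable Y₀) (hY₁ : Measurable Y₁)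
    (hY₀N : ∀ ω, Y₀ ω ≤ N)
    (hindep : IndepFun Y₀ (fun ω => (P ω, R ω)) μ)
    (hcond : ∀ (m : ℕ) (s : Set (ℕ × ℝ × ℝ)), MeasurableSet s →
      (μ {ω | Y₁ ω = m ∧ (Y₀ ω, P ω, R ω) ∈ s}).toReal
        = ∫ ω in {ω | (Y₀ ω, P ω, R ω) ∈ s}, convPMF N (Y₀ ω) (P ω) (R ω) m ∂μ)
    (hstat : Measure.map Y₁ μ = Measure.map Y₀ μ) :
    ∫ ω, (Y₀ ω : ℝ) ∂μ
      = (N : ℝ) * (1 - ∫ ω, P ω ∂μ) / (2 - (∫ ω, P ω ∂μ) - ∫ ω, R ω ∂μ) := by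
  have hPR' : ∀ᵐ ω ∂μ, P ω ∈ Set.Icc (0 : ℝ) 1 ∧ R ω ∈ Set.Icc (0 : ℝ) 1 :=
    hPR.mono fun _ h => ⟨Set.Ioo_subset_Icc_self h.1, Set.Ioo_subset_Icc_self h.2⟩
  have hY₁N : ∀ᵐ ω ∂μ, Y₁ ω ≤ N := by
    refine ae_of_ae_map (p := (· ≤ N)) hY₁.aemeasurable ?_
    rw [hstat, ae_map_iff hY₀.aemeasurable .of_discrete]
    exact .of_forall hY₀N
  have hstatE : ∫ ω, (Y₁ ω : ℝ) ∂μ = ∫ ω, (Y₀ ω : ℝ) ∂μ := by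
    rw [← integral_map hY₁.aemeasurable measurable_from_top.aestronglyMeasurable, hstat,
      integral_map hY₀.aemeasurable measurable_from_top.aestronglyMeasurable]
  have hlaw (m : ℕ) : μ.real {ω | Y₁ ω = m} = ∫ ω, convPMF N (Y₀ ω) (P ω) (R ω) m ∂μ := by
    simpa [measureReal_def] using hcond m Set.univ MeasurableSet.univ
  have hbalance := integral_natCast_eq_of_law_eq_convPMF hP hR hPR' hY₀ hY₁ hY₀N hY₁N hlaw
  rw [hstatE, integral_mean_convPMF_of_indepFun hP hR hPR' hY₀ hY₀N hindep] at hbalance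
  have hEP : ∫ ω, P ω ∂μ < 1 := integral_lt_of_ae_lt
    (.of_mem_Icc 0 1 hP.aemeasurable (hPR'.mono fun _ h => h.1)) (hPR.mono fun _ h => h.1.2)
  have hER : ∫ ω, R ω ∂μ < 1 := integral_lt_of_ae_lt
    (.of_mem_Icc 0 1 hR.aemeasurable (hPR'.mono fun _ h => h.2)) (hPR.mono fun _ h => h.2.2)
  rw [eq_div_iff (by linarith)]
  linarith
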